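/- arXiv:2410.14163 — 3 statements merged into one kernel-verified Lean document; each statement's English description precedes it below -/
import Mathlib

section
/- The convex hull of S is a strict subset of the aggregation closure over ℝ²; that is, conv(S) ⊊ ⋂_{λ ∈ ℝ²} conv(S_λ). -/
open Set

/-- The box `[0,1]³`. -/
def unitCube : Set (ℝ × ℝ × ℝ) :=
  {p | p.1 ∈ Icc (0:ℝ) 1 ∧ p.2.1 ∈ Icc (0:ℝ) 1 ∧ p.2.2 ∈ Icc (0:ℝ) 1}

/-- `S = {(x,y₁,y₂) ∈ [0,1]³ : −2xy₁ + 9xy₂ + y₁ − 5y₂ = 0, 5xy₁ + 3y₁ + 3y₂ = 6}`. -/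
def setS : Set (ℝ × ℝ × ℝ) :=
  {p ∈ unitCube |
    -2 * p.1 * p.2.1 + 9 * p.1 * p.2.2 + p.2.1 - 5 * p.2.2 = 0 ∧
    5 * p.1 * p.2.1 + 3 * p.2.1 + 3 * p.2.2 = 6}

/-- The aggregated set `S_λ` with weights `l = (λ₁, λ₂)`. -/
def setAgg (l : ℝ × ℝ) : Set (ℝ × ℝ × ℝ) :=
  {p ∈ unitCube |
    l.1 * (-2 * p.1 * p.2.1 + 9 * p.1 * p.2.2 + p.2.1 - 5 * p.2.2) +
      l.2 * (5 * p.1 * p.2.1 + 3 * p.2.1 + 3 * p.2.2 - 6) = 0}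

/-!
Every `S_λ` contains `S`, which gives the inclusion. For strictness take `p₀ = (7/12, 3/4, 2/3)`.
It violates `2y₁ + y₂ ≤ 21/10`, a half-space containing `S`, so `p₀ ∉ conv S`. On the other hand
`S_λ ⊆ S_{cλ}`, so it suffices to treat `λ = (1, u)` and `λ = (-r, 1)` with `u, r ≥ 0`; for these
`p₀` is an explicit convex combination of four points of `S_λ`, with weights polynomial in the
parameter. The equation of `S_λ` is affine in each coordinate separately, so each of these points
is found by fixing two coordinates and solving for the third.
-/
local notation "p₀" => ((7 : ℝ) / 12, (3 : ℝ) / 4, (2 : ℝ) / 3)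

theorem mem_convexHull_of_smul_eq_four {E : Type*} [AddCommGroup E] [Module ℝ E] {s : Set E}
    {p z₀ z₁ z₂ z₃ : E} (h₀ : z₀ ∈ s) (h₁ : z₁ ∈ s) (h₂ : z₂ ∈ s) (h₃ : z₃ ∈ s)
    {a b c d : ℝ} (ha : 0 ≤ a) (hb : 0 ≤ b) (hc : 0 ≤ c) (hd : 0 ≤ d) (hpos : 0 < a + b + c + d)
    (hp : (a + b + c + d) • p = a • z₀ + b • z₁ + c • z₂ + d • z₃) :
    p ∈ convexHull ℝ s := by
  have hsum : ∑ i, ![a, b, c, d] i = a + b + c + d := by simp [Fin.sum_univ_four]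
  have key := Finset.univ.centerMass_mem_convexHull (s := s) (w := ![a, b, c, d])
    (z := ![z₀, z₁, z₂, z₃])
    (by simp [Fin.forall_fin_succ, *]) (hsum ▸ hpos) (by simp [Fin.forall_fin_succ, *])
  simpa [Finset.centerMass, hsum, Fin.sum_univ_four, ← hp, hpos.ne'] using key

theorem mk_mem_setAgg {a b x y₁ y₂ : ℝ} (hx : x ∈ Icc (0 : ℝ) 1) (hy₁ : y₁ ∈ Icc (0 : ℝ) 1)
    (hy₂ : y₂ ∈ Icc (0 : ℝ) 1)
    (h : a * (-2 * x * y₁ + 9 * x * y₂ + y₁ - 5 * y₂) + b * (5 * x * y₁ + 3 * y₁ + 3 * y₂ - 6) = 0) :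
    (x, y₁, y₂) ∈ setAgg (a, b) :=
  ⟨⟨hx, hy₁, hy₂⟩, h⟩

theorem setAgg_subset_setAgg_smul (c : ℝ) (l : ℝ × ℝ) : setAgg l ⊆ setAgg (c • l) := by
  rintro q ⟨hq, h⟩
  refine ⟨hq, ?_⟩
  simp only [Prod.smul_fst, Prod.smul_snd, smul_eq_mul]
  linear_combination c * h

theorem setS_subset_setAgg (l : ℝ × ℝ) : setS ⊆ setAgg l := by
  rintro q ⟨hq, h₁, h₂⟩
  exact ⟨hq, by linear_combination l.1 * h₁ + l.2 * h₂⟩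

/- Eliminating one variable at a time writes `y₁` and `y₂` on `S` as rational functions of `x`
alone, which turns the bound into a polynomial inequality in `x`. -/
theorem setS_subset_halfSpace : setS ⊆ {q | 2 * q.2.1 + q.2.2 ≤ 21 / 10} := by
  rintro ⟨x, y₁, y₂⟩ ⟨⟨-, ⟨hy₁, hy₁'⟩, -⟩, h₁, h₂⟩
  have e₁ : y₁ * (18 - 8 * x - 45 * x ^ 2) = 30 - 54 * x := by
    linear_combination 3 * h₁ + (5 - 9 * x) * h₂
  have e₂ : y₂ * (45 * x ^ 2 + 8 * x - 18) = 12 * x - 6 := by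
    linear_combination (5 * x + 3) * h₁ + (2 * x - 1) * h₂
  have hneg : 18 - 8 * x - 45 * x ^ 2 < 0 := by
    nlinarith [sq_nonneg (45 * x - 23)]
  show 2 * y₁ + y₂ ≤ 21 / 10
  nlinarith [sq_nonneg (1890 * x - 1032)]

theorem p₀_not_mem_convexHull_setS : p₀ ∉ convexHull ℝ setS := by
  have hconv : Convex ℝ {q : ℝ × ℝ × ℝ | 2 * q.2.1 + q.2.2 ≤ 21 / 10} :=
    convex_halfSpace_le ⟨fun _ _ => by simp only [Prod.snd_add, Prod.fst_add]; ring,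
      fun _ _ => by simp only [Prod.smul_snd, Prod.smul_fst, smul_eq_mul]; ring⟩ _
  intro hp
  have := convexHull_min setS_subset_halfSpace hconv hp
  norm_num at this

theorem p₀_mem_convexHull_setAgg_one (u : ℝ) (hu : 0 ≤ u) :
    p₀ ∈ convexHull ℝ (setAgg (1, u)) := by
  have d₀ : (0 : ℝ) < 23 + 10 * u := by positivity
  have d₁ : (0 : ℝ) < 12 + 15 * u := by positivity
  have d₂ : (0 : ℝ) < 7 + 5 * u := by positivity
  refine mem_convexHull_of_smul_eq_four
    (mk_mem_setAgg (x := (13 + 9 * u) / (23 + 10 * u)) (y₁ := 1 / 2) (y₂ := 3 / 4)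
      ⟨by positivity, (div_le_one d₀).2 (by linarith)⟩ (by norm_num) (by norm_num)
      (by field_simp; ring))
    (mk_mem_setAgg (x := (7 + 9 * u) / (12 + 15 * u)) (y₁ := 3 / 4) (y₂ := 1 / 2)
      ⟨by positivity, (div_le_one d₁).2 (by linarith)⟩ (by norm_num) (by norm_num)
      (by field_simp; ring))
    (mk_mem_setAgg (x := 4 / (7 + 5 * u)) (y₁ := 1) (y₂ := 1)
      ⟨by positivity, (div_le_one d₂).2 (by linarith)⟩ (by norm_num) (by norm_num)
      (by field_simp; ring))
    (mk_mem_setAgg (x := 1) (y₁ := 24 / 35) (y₂ := 6 / 35) (by norm_num) (by norm_num)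
      (by norm_num) (by norm_num))
    (a := 223744 + 452308 * u + 263380 * u ^ 2 + 47400 * u ^ 3)
    (b := 519456 + 755208 * u + 134280 * u ^ 2 + 2400 * u ^ 3)
    (c := 227920 + 491611 * u + 318235 * u ^ 2 + 59550 * u ^ 3)
    (d := 16240 + 152845 * u + 213325 * u ^ 2 + 47250 * u ^ 3)
    (by positivity) (by positivity) (by positivity) (by positivity) (by positivity) ?_
  simp only [Prod.smul_mk, Prod.mk_add_mk, smul_eq_mul, Prod.mk.injEq]
  refine ⟨?_, by ring, by ring⟩
  field_simp
  ring

theorem p₀_mem_convexHull_setAgg_neg_one_of_le_two (r : ℝ) (hr₀ : 0 ≤ r) (hr₂ : r ≤ 2) :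
    p₀ ∈ convexHull ℝ (setAgg (-r, 1)) := by
  have d₁ : (0 : ℝ) < 32 + 4 * r := by positivity
  have d₂ : (0 : ℝ) < 3 + 5 * r := by positivity
  refine mem_convexHull_of_smul_eq_four
    (mk_mem_setAgg (x := 1 / 2) (y₁ := (30 - 3 * r) / 44) (y₂ := 3 / 4)
      (by norm_num) ⟨by linarith, by linarith⟩ (by norm_num) (by field_simp; ring))
    (mk_mem_setAgg (x := 1) (y₁ := (15 + 12 * r) / (32 + 4 * r)) (y₂ := 3 / 4)
      (by norm_num) ⟨by positivity, (div_le_one d₁).2 (by linarith)⟩ (by norm_num)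
      (by field_simp; ring))
    (mk_mem_setAgg (x := 0) (y₁ := 1) (y₂ := (3 + r) / (3 + 5 * r))
      (by norm_num) (by norm_num) ⟨by positivity, (div_le_one d₂).2 (by linarith)⟩
      (by field_simp; ring))
    (mk_mem_setAgg (x := 1) (y₁ := 24 / 35) (y₂ := 6 / 35) (by norm_num) (by norm_num)
      (by norm_num) (by norm_num))
    (a := 10692 - 110484 * r + 427680 * r ^ 2)
    (b := 23424 + 139984 * r + 114572 * r ^ 2 + 12180 * r ^ 3)
    (c := 37179 + 92097 * r + 53865 * r ^ 2 + 6075 * r ^ 3)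
    (d := 30765 - 33145 * r + 46375 * r ^ 2 - 3675 * r ^ 3)
    (by nlinarith [sq_nonneg (855360 * r - 110484)]) (by positivity) (by positivity)
    (by nlinarith [mul_nonneg (sq_nonneg r) (by linarith : (0 : ℝ) ≤ 2 - r),
      sq_nonneg (78050 * r - 33145)])
    (by nlinarith [sq_nonneg r, pow_nonneg hr₀ 3]) ?_
  simp only [Prod.smul_mk, Prod.mk_add_mk, smul_eq_mul, Prod.mk.injEq]
  refine ⟨by ring, ?_, ?_⟩ <;> field_simp <;> ring

theorem p₀_mem_convexHull_setAgg_neg_two_sub (s : ℝ) (hs : 0 ≤ s) :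
    p₀ ∈ convexHull ℝ (setAgg (-(2 + s), 1)) := by
  have d₀ : (0 : ℝ) < 18 + 9 * s := by positivity
  have d₁ : (0 : ℝ) < 9 + 7 * s := by positivity
  have d₂ : (0 : ℝ) < 52 + 20 * s := by positivity
  refine mem_convexHull_of_smul_eq_four
    (mk_mem_setAgg (x := (1 + 5 * s) / (18 + 9 * s)) (y₁ := 0) (y₂ := 1 / 2)
      ⟨by positivity, (div_le_one d₀).2 (by linarith)⟩ (by norm_num) (by norm_num)
      (by field_simp; ring))
    (mk_mem_setAgg (x := (6 + 4 * s) / (9 + 7 * s)) (y₁ := 3 / 4) (y₂ := 3 / 4)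
      ⟨by positivity, (div_le_one d₁).2 (by linarith)⟩ (by norm_num) (by norm_num)
      (by field_simp; ring))
    (mk_mem_setAgg (x := 0) (y₁ := 3 / 4) (y₂ := (21 + 3 * s) / (52 + 20 * s))
      (by norm_num) (by norm_num) ⟨by positivity, (div_le_one d₂).2 (by linarith)⟩
      (by field_simp; ring))
    (mk_mem_setAgg (x := 2 / 3) (y₁ := 9 / 11) (y₂ := 3 / 11) (by norm_num) (by norm_num)
      (by norm_num) (by norm_num))
    (a := 1350 + 2817 * s + 1899 * s ^ 2 + 414 * s ^ 3)
    (b := 137844 + 234391 * s + 128896 * s ^ 2 + 23317 * s ^ 3)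
    (c := 20592 + 18437 * s + 4448 * s ^ 2 + 155 * s ^ 3)
    (d := 14850 + 30987 * s + 20889 * s ^ 2 + 4554 * s ^ 3)
    (by positivity) (by positivity) (by positivity) (by positivity) (by positivity) ?_
  simp only [Prod.smul_mk, Prod.mk_add_mk, smul_eq_mul, Prod.mk.injEq]
  refine ⟨?_, ?_, ?_⟩ <;> field_simp <;> ring

theorem p₀_mem_convexHull_setAgg_neg_one (r : ℝ) (hr : 0 ≤ r) :
    p₀ ∈ convexHull ℝ (setAgg (-r, 1)) := by
  rcases le_total r 2 with h | h
  · exact p₀_mem_convexHull_setAgg_neg_one_of_le_two r hr h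
  · simpa using p₀_mem_convexHull_setAgg_neg_two_sub (r - 2) (by linarith)

theorem exists_eq_smul_one_or_smul_neg_one (l : ℝ × ℝ) :
    (∃ c u : ℝ, 0 ≤ u ∧ l = c • (1, u)) ∨ ∃ c r : ℝ, 0 ≤ r ∧ l = c • (-r, 1) := by
  obtain ⟨a, b⟩ := l
  by_cases ha : a = 0
  · exact .inr ⟨b, 0, le_rfl, by simp [ha]⟩
  rcases le_or_gt 0 (b / a) with hba | hba
  · exact .inl ⟨a, b / a, hba, by ext <;> simp [field]⟩
  · have hb : b ≠ 0 := by rintro rfl; simp at hba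
    refine .inr ⟨b, -a / b, ?_, by ext <;> simp [field]⟩
    rw [neg_div, neg_nonneg, ← inv_div]
    exact inv_nonpos.2 hba.le

theorem p₀_mem_convexHull_setAgg (l : ℝ × ℝ) : p₀ ∈ convexHull ℝ (setAgg l) := by
  rcases exists_eq_smul_one_or_smul_neg_one l with ⟨c, u, hu, rfl⟩ | ⟨c, r, hr, rfl⟩
  · exact convexHull_mono (setAgg_subset_setAgg_smul c _) (p₀_mem_convexHull_setAgg_one u hu)
  · exact convexHull_mono (setAgg_subset_setAgg_smul c _) (p₀_mem_convexHull_setAgg_neg_one r hr)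

theorem stmt3 :
    convexHull ℝ setS ⊂ ⋂ l : ℝ × ℝ, convexHull ℝ (setAgg l) := by
  refine (ssubset_iff_of_subset ?_).2
    ⟨p₀, mem_iInter.2 p₀_mem_convexHull_setAgg, p₀_not_mem_convexHull_setS⟩
  exact subset_iInter fun l => convexHull_mono (setS_subset_setAgg l)
end

section
/- Every (x, y1, y2) ∈ S satisfies −2·x + 10·y1 − 10·y2 < 5; consequently, the point (7/10, 7/8, 1/6), which satisfies −2·(7/10) + 10·(7/8) − 10·(1/6) = 341/60 > 5, does not belong to conv(S). -/
/-!
Eliminating `y₂` with the second equation turns the first into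
`y₁ · (45x² + 8x − 18) = 54x − 30`. Since `y₁ ≤ 1` and `45x² − 46x + 12` has no real root, the
quadratic factor is positive. Another combination of the two equations gives
`3 (5 − ℓ) (45x² + 8x − 18) = 270x³ + 723x² − 1248x + 450` for `ℓ = −2x + 10y₁ − 10y₂`, and this
cubic is positive for `x ≥ 0`; hence `ℓ < 5` on `S`. The half-space `ℓ ≤ 5` is convex, so it
contains `conv(S)` but not the given point.
-/

open Set

theorem notMem_convexHull_of_forall_le_of_lt {𝕜 E β : Type*} [Semiring 𝕜] [PartialOrder 𝕜]
    [AddCommMonoid E] [Module 𝕜 E] [AddCommMonoid β] [LinearOrder β] [IsOrderedAddMonoid β]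
    [Module 𝕜 β] [PosSMulMono 𝕜 β] {f : E → β} (hf : IsLinearMap 𝕜 f) {s : Set E} {c : β}
    {q : E} (hs : ∀ p ∈ s, f p ≤ c) (hq : c < f q) : q ∉ convexHull 𝕜 s :=
  fun h ↦ not_le.mpr hq (convexHull_min hs (convex_halfSpace_le hf c) h)

section Elimination

variable {x y₁ y₂ : ℝ}

theorem mul_quadratic_eq_of_eqs (e₁ : -2 * x * y₁ + 9 * x * y₂ + y₁ - 5 * y₂ = 0)
    (e₂ : 5 * x * y₁ + 3 * y₁ + 3 * y₂ = 6) :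
    y₁ * (45 * x ^ 2 + 8 * x - 18) = 54 * x - 30 := by
  linear_combination -3 * e₁ + (9 * x - 5) * e₂

theorem five_sub_objective_mul_quadratic_eq (e₁ : -2 * x * y₁ + 9 * x * y₂ + y₁ - 5 * y₂ = 0)
    (e₂ : 5 * x * y₁ + 3 * y₁ + 3 * y₂ = 6) :
    3 * (5 - (-2 * x + 10 * y₁ - 10 * y₂)) * (45 * x ^ 2 + 8 * x - 18) =
      270 * x ^ 3 + 723 * x ^ 2 - 1248 * x + 450 := by
  linear_combination (150 * x + 180) * e₁ +
    (10 * (45 * x ^ 2 + 8 * x - 18) - (50 * x + 60) * (9 * x - 5)) * e₂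

theorem quadratic_pos_of_mul_eq (hy₁ : y₁ ≤ 1)
    (h : y₁ * (45 * x ^ 2 + 8 * x - 18) = 54 * x - 30) : 0 < 45 * x ^ 2 + 8 * x - 18 := by
  by_contra! hD
  -- otherwise `54x − 30 ≥ 45x² + 8x − 18`, i.e. `45x² − 46x + 12 ≤ 0`
  nlinarith [mul_le_mul_of_nonpos_right hy₁ hD, sq_nonneg (x - 23 / 45)]

theorem cubic_pos_of_nonneg (hx : 0 ≤ x) : 0 < 270 * x ^ 3 + 723 * x ^ 2 - 1248 * x + 450 := by
  nlinarith [sq_nonneg (x - 7 / 11), mul_nonneg hx (sq_nonneg (x - 7 / 11))]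

theorem objective_lt_five (hx : 0 ≤ x) (hy₁ : y₁ ≤ 1)
    (e₁ : -2 * x * y₁ + 9 * x * y₂ + y₁ - 5 * y₂ = 0) (e₂ : 5 * x * y₁ + 3 * y₁ + 3 * y₂ = 6) :
    -2 * x + 10 * y₁ - 10 * y₂ < 5 := by
  have hD := quadratic_pos_of_mul_eq hy₁ (mul_quadratic_eq_of_eqs e₁ e₂)
  have hP := five_sub_objective_mul_quadratic_eq e₁ e₂ ▸ cubic_pos_of_nonneg hx
  linarith [pos_of_mul_pos_left hP hD.le]

end Elimination

theorem objective_lt_five_of_mem_setS :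
    ∀ p ∈ setS, -2 * p.1 + 10 * p.2.1 - 10 * p.2.2 < 5 := by
  rintro ⟨x, y₁, y₂⟩ ⟨⟨⟨hx, -⟩, ⟨-, hy₁⟩, -⟩, e₁, e₂⟩
  exact objective_lt_five hx hy₁ e₁ e₂

theorem isLinearMap_objective :
    IsLinearMap ℝ (fun p : ℝ × ℝ × ℝ ↦ -2 * p.1 + 10 * p.2.1 - 10 * p.2.2) :=
  ⟨fun p q ↦ by simp only [Prod.fst_add, Prod.snd_add]; ring,
   fun c p ↦ by simp only [Prod.smul_fst, Prod.smul_snd, smul_eq_mul]; ring⟩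

theorem stmt12 :
    (∀ p ∈ setS, -2 * p.1 + 10 * p.2.1 - 10 * p.2.2 < 5) ∧
    (-2 * (7/10 : ℝ) + 10 * (7/8 : ℝ) - 10 * (1/6 : ℝ) = 341/60) ∧
    ((341/60 : ℝ) > 5) ∧
    ((7/10 : ℝ), (7/8 : ℝ), (1/6 : ℝ)) ∉ convexHull ℝ setS := by
  refine ⟨objective_lt_five_of_mem_setS, by norm_num, by norm_num, ?_⟩
  exact notMem_convexHull_of_forall_le_of_lt isLinearMap_objective
    (fun p hp ↦ (objective_lt_five_of_mem_setS p hp).le) (by norm_num)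
end

section
/- For every λ ∈ ℝ², the point (7/10, 7/8, 1/6) belongs to conv(S_λ). -/
open Set

/-!
Let `p = (7/10, 7/8, 1/6)` and write `G_λ` for the aggregated constraint, so that `S_λ` is the
zero set of `G_λ` in the cube. If `a, b` lie in the cube, `p ∈ [a, b]` and
`G_λ a, G_λ b ≤ 0 ≤ G_λ p`, the intermediate value theorem gives zeros `z₁ ∈ [a, p]` and `z₂ ∈ [p, b]` of `G_λ`, and `p ∈ [z₁, z₂] ⊆ conv S_λ`.
As `S_{cλ} = S_λ` for `c ≠ 0`, we may assume `G_λ p ≥ 0`, and it remains to exhibit such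
segments: one serves all `λ₁ ≥ 0`, four serve `λ₁ < 0` with `λ₂ / |λ₁| ≤ 5/24`, and on the
remaining cone, which accumulates at `λ = (0, 1)`, the segment moves with `λ₁ / λ₂`.
-/

open AffineMap in
theorem mem_convexHull_zeroSet_of_mem_segment {E : Type*} [AddCommGroup E] [Module ℝ E]
    [TopologicalSpace E] [IsTopologicalAddGroup E] [ContinuousSMul ℝ E]
    {K : Set E} (hK : Convex ℝ K) {f : E → ℝ} (hf : ContinuousOn f K) {a b p : E}
    (ha : a ∈ K) (hb : b ∈ K) (hp : p ∈ segment ℝ a b)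
    (hfa : f a ≤ 0) (hfb : f b ≤ 0) (hfp : 0 ≤ f p) :
    p ∈ convexHull ℝ {q ∈ K | f q = 0} := by
  rw [segment_eq_image_lineMap] at hp
  obtain ⟨t, ⟨ht0, ht1⟩, rfl⟩ := hp
  have hmaps : MapsTo (lineMap a b : ℝ → E) (Icc 0 1) K := hK.mapsTo_lineMap ha hb
  have hg : ContinuousOn (fun s : ℝ => f (lineMap a b s)) (Icc 0 1) :=
    hf.comp lineMap_continuous.continuousOn hmaps
  obtain ⟨s₁, ⟨hs₁0, hs₁t⟩, hs₁⟩ := intermediate_value_Icc ht0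
    (hg.mono (Icc_subset_Icc le_rfl ht1)) ⟨by simpa using hfa, hfp⟩
  obtain ⟨s₂, ⟨hs₂t, hs₂1⟩, hs₂⟩ := intermediate_value_Icc' ht1
    (hg.mono (Icc_subset_Icc ht0 le_rfl)) ⟨by simpa using hfb, hfp⟩
  have hzero : ∀ s ∈ Icc (0 : ℝ) 1, f (lineMap a b s) = 0 →
      lineMap a b s ∈ {q ∈ K | f q = 0} := fun s hs h => ⟨hmaps hs, h⟩
  refine segment_subset_convexHull (hzero s₁ ⟨hs₁0, hs₁t.trans ht1⟩ hs₁)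
    (hzero s₂ ⟨ht0.trans hs₂t, hs₂1⟩ hs₂) ?_
  rw [← image_segment, segment_eq_Icc (hs₁t.trans hs₂t)]
  exact mem_image_of_mem _ ⟨hs₁t, hs₂t⟩

theorem convex_unitCube : Convex ℝ unitCube :=
  (convex_Icc 0 1).prod ((convex_Icc 0 1).prod (convex_Icc 0 1))

noncomputable def targetPoint : ℝ × ℝ × ℝ := (7/10, 7/8, 1/6)

def aggConstraint (l : ℝ × ℝ) (q : ℝ × ℝ × ℝ) : ℝ :=
  l.1 * (-2 * q.1 * q.2.1 + 9 * q.1 * q.2.2 + q.2.1 - 5 * q.2.2) +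
    l.2 * (5 * q.1 * q.2.1 + 3 * q.2.1 + 3 * q.2.2 - 6)

theorem setAgg_eq (l : ℝ × ℝ) : setAgg l = {q ∈ unitCube | aggConstraint l q = 0} := rfl

theorem continuous_aggConstraint (l : ℝ × ℝ) : Continuous (aggConstraint l) := by
  unfold aggConstraint
  fun_prop

theorem aggConstraint_smul (c : ℝ) (l : ℝ × ℝ) (q : ℝ × ℝ × ℝ) :
    aggConstraint (c • l) q = c * aggConstraint l q := by
  simp only [aggConstraint, Prod.smul_fst, Prod.smul_snd, smul_eq_mul]
  ring

theorem setAgg_smul {c : ℝ} (hc : c ≠ 0) (l : ℝ × ℝ) : setAgg (c • l) = setAgg l := by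
  simp only [setAgg_eq, aggConstraint_smul, mul_eq_zero, hc, false_or]

theorem setAgg_neg (l : ℝ × ℝ) : setAgg (-l) = setAgg l := by
  rw [← neg_one_smul ℝ l, setAgg_smul (by norm_num)]

theorem targetPoint_mem_convexHull_setAgg_of_pair {l : ℝ × ℝ} {a b : ℝ × ℝ × ℝ} (t : ℝ)
    (ht0 : 0 ≤ t) (ht1 : t ≤ 1) (hab : t • a + (1 - t) • b = targetPoint)
    (ha : a ∈ unitCube) (hb : b ∈ unitCube)
    (hGa : aggConstraint l a ≤ 0) (hGb : aggConstraint l b ≤ 0)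
    (hGp : 0 ≤ aggConstraint l targetPoint) :
    targetPoint ∈ convexHull ℝ (setAgg l) :=
  setAgg_eq l ▸ mem_convexHull_zeroSet_of_mem_segment convex_unitCube
    (continuous_aggConstraint l).continuousOn ha hb
    ⟨t, 1 - t, ht0, by linarith, by ring, hab⟩ hGa hGb hGp

theorem targetPoint_mem_convexHull_setAgg_of_fst_nonneg {l : ℝ × ℝ} (hl : 0 ≤ l.1)
    (hp : 0 ≤ aggConstraint l targetPoint) : targetPoint ∈ convexHull ℝ (setAgg l) := by
  refine targetPoint_mem_convexHull_setAgg_of_pair (a := (1/2, 1, 1/6)) (b := (1, 11/16, 1/6))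
    (3/5) ?_ ?_ ?_ ?_ ?_ ?_ ?_ hp <;>
  norm_num [unitCube, targetPoint, aggConstraint] <;> linarith

/- With `r = λ₂ / |λ₁|`, the four segments below serve `r` in `[-34/45, -15/34]`,
`[-27/56, -59/175]`, `[-13/36, -67/225]` and `[-3/10, 2/9]`, while `G_λ p ≥ 0` means `r ≥ -32/45`. -/
theorem targetPoint_mem_convexHull_setAgg_of_fst_neg_of_le {l : ℝ × ℝ} (hl : l.1 < 0)
    (hr : 24 * l.2 ≤ -5 * l.1) (hp : 0 ≤ aggConstraint l targetPoint) :
    targetPoint ∈ convexHull ℝ (setAgg l) := by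
  rcases le_or_gt l.2 (9/20 * l.1) with h₁ | h₁
  · refine targetPoint_mem_convexHull_setAgg_of_pair (a := (5/8, 1, 1/10))
      (b := (19/20, 11/24, 7/18)) (10/13) ?_ ?_ ?_ ?_ ?_ ?_ ?_ hp <;>
    norm_num [unitCube, targetPoint, aggConstraint] at hp ⊢ <;> linarith
  rcases le_or_gt l.2 (7/20 * l.1) with h₂ | h₂
  · refine targetPoint_mem_convexHull_setAgg_of_pair (a := (1, 1/4, 2/5))
      (b := (16/25, 1, 3/25)) (1/6) ?_ ?_ ?_ ?_ ?_ ?_ ?_ hp <;>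
    norm_num [unitCube, targetPoint, aggConstraint] <;> linarith
  rcases le_or_gt l.2 (3/10 * l.1) with h₃ | h₃
  · refine targetPoint_mem_convexHull_setAgg_of_pair (a := (1, 1/4, 1/3))
      (b := (16/25, 1, 2/15)) (1/6) ?_ ?_ ?_ ?_ ?_ ?_ ?_ hp <;>
    norm_num [unitCube, targetPoint, aggConstraint] <;> linarith
  · refine targetPoint_mem_convexHull_setAgg_of_pair (a := (1/5, 1, 0))
      (b := (1, 4/5, 4/15)) (3/8) ?_ ?_ ?_ ?_ ?_ ?_ ?_ hp <;>
    norm_num [unitCube, targetPoint, aggConstraint] <;> linarith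

/- At `c = 0` both endpoints lie on `5 x y₁ + 3 y₁ + 3 y₂ = 6`; their `y₂`-coordinates are
tilted so that `G_(c,1)` takes the values `-248 c² / 28125` and `c (57 - 124 c) / 675` there. -/
theorem targetPoint_mem_convexHull_setAgg_mk_one {c : ℝ} (hc₀ : -150/31 ≤ c) (hc : c ≤ 0) :
    targetPoint ∈ convexHull ℝ (setAgg (c, 1)) := by
  refine targetPoint_mem_convexHull_setAgg_of_pair (a := (13/25, 1, 2/15 + 31 * c / 1125))
    (b := (1, 2/3, 2/9 - 31 * c / 675)) (5/8) ?_ ?_ ?_ ?_ ?_ ?_ ?_ ?_ <;>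
  norm_num [unitCube, targetPoint, aggConstraint] <;>
  split_ands <;> nlinarith [sq_nonneg c]

theorem targetPoint_mem_convexHull_setAgg_of_fst_neg {l : ℝ × ℝ} (hl : l.1 < 0)
    (hp : 0 ≤ aggConstraint l targetPoint) : targetPoint ∈ convexHull ℝ (setAgg l) := by
  rcases le_or_gt (24 * l.2) (-5 * l.1) with hr | hr
  · exact targetPoint_mem_convexHull_setAgg_of_fst_neg_of_le hl hr hp
  have hl₂ : 0 < l.2 := by linarith
  have hscale : l = l.2 • ((l.1 / l.2, 1) : ℝ × ℝ) := by
    ext <;> simp [mul_div_cancel₀ _ hl₂.ne']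
  rw [hscale, setAgg_smul hl₂.ne']
  refine targetPoint_mem_convexHull_setAgg_mk_one ?_ (div_nonpos_of_nonpos_of_nonneg hl.le hl₂.le)
  rw [le_div_iff₀ hl₂]
  linarith

theorem stmt13 (l : ℝ × ℝ) :
    ((7/10 : ℝ), (7/8 : ℝ), (1/6 : ℝ)) ∈ convexHull ℝ (setAgg l) := by
  wlog hp : 0 ≤ aggConstraint l targetPoint generalizing l
  · have hp' : 0 ≤ aggConstraint (-l) targetPoint := by
      rw [← neg_one_smul ℝ l, aggConstraint_smul]
      linarith
    simpa only [setAgg_neg] using this (-l) hp'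
  rcases le_or_gt 0 l.1 with hl | hl
  · exact targetPoint_mem_convexHull_setAgg_of_fst_nonneg hl hp
  · exact targetPoint_mem_convexHull_setAgg_of_fst_neg hl hp
end
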